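/- arXiv:1801.06045 — 2 statements merged into one kernel-verified Lean document; each statement's English description precedes it below -/
import Mathlib

section
/- For every probability map p between MV-algebras and all a, b, one has p(a ⊙ b) ≥ p(a) ⊙ p(b); and if a ⊙ b = 0 then p(a) ⊙ p(b) = 0. -/
/-- An MV-algebra: a commutative monoid `(M, ⊕, 0)` with an involutive negation
satisfying `a ⊕ ¬0 = ¬0` and the Łukasiewicz axiom. -/
structure MVAlgebra (M : Type*) where
  oplus : M → M → M
  mvneg : M → M
  zero : M
  oplus_assoc : ∀ a b c, oplus (oplus a b) c = oplus a (oplus b c)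
  oplus_comm : ∀ a b, oplus a b = oplus b a
  oplus_zero : ∀ a, oplus a zero = a
  mvneg_mvneg : ∀ a, mvneg (mvneg a) = a
  oplus_neg_zero : ∀ a, oplus a (mvneg zero) = mvneg zero
  luk : ∀ a b, oplus (mvneg (oplus (mvneg a) b)) b = oplus (mvneg (oplus (mvneg b) a)) a

namespace MVAlgebra

variable {M : Type*} (A : MVAlgebra M)

/-- `1 := ¬0`. -/
def one : M := A.mvneg A.zero

/-- `a ⊙ b := ¬(¬a ⊕ ¬b)`. -/
def otimes (a b : M) : M := A.mvneg (A.oplus (A.mvneg a) (A.mvneg b))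

/-- `a ⊖ b := a ⊙ ¬b`. -/
def ominus (a b : M) : M := A.otimes a (A.mvneg b)

/-- `a ∨ b := ¬(¬a ⊕ b) ⊕ b`. -/
def sup (a b : M) : M := A.oplus (A.mvneg (A.oplus (A.mvneg a) b)) b

/-- `a ∧ b := a ⊙ (¬a ⊕ b)`. -/
def inf (a b : M) : M := A.otimes a (A.oplus (A.mvneg a) b)

/-- The natural order: `a ≤ b` iff `¬a ⊕ b = 1`. -/
def le (a b : M) : Prop := A.oplus (A.mvneg a) b = A.one

end MVAlgebra

/-- A probability map `p : M → N` between MV-algebras: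
(P1) `p(a ⊕ b) = p(a) ⊕ p(b ∧ ¬a)`, (P2) `p(¬a) = ¬p(a)`, (P3) `p(1) = 1`. -/
structure IsProbabilityMap {M N : Type*} (A : MVAlgebra M) (B : MVAlgebra N)
    (p : M → N) : Prop where
  p1 : ∀ a b, p (A.oplus a b) = B.oplus (p a) (p (A.inf b (A.mvneg a)))
  p2 : ∀ a, p (A.mvneg a) = B.mvneg (p a)
  p3 : p A.one = B.one

/-!
Monotonicity of `p` and (P1) give subadditivity `p(a ⊕ b) ≤ p(a) ⊕ p(b)`; since `⊙` is the
De Morgan dual of `⊕` and `p` commutes with `¬` by (P2), this turns into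
`p(a) ⊙ p(b) ≤ p(a ⊙ b)`. If `a ⊙ b = 0`, then `p(a ⊙ b) = p(¬1) = 0`, and `0` is the only
element below `0`.
-/

namespace MVAlgebra

variable {M : Type*} (A : MVAlgebra M)

theorem zero_oplus (a : M) : A.oplus A.zero a = a := by
  rw [A.oplus_comm, A.oplus_zero]

theorem oplus_one (a : M) : A.oplus a A.one = A.one := A.oplus_neg_zero a

theorem one_oplus (a : M) : A.oplus A.one a = A.one := by
  rw [A.oplus_comm, oplus_one]

theorem mvneg_one : A.mvneg A.one = A.zero := A.mvneg_mvneg A.zero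

theorem mvneg_oplus_self (a : M) : A.oplus (A.mvneg a) a = A.one := by
  have h := A.luk A.one a
  rw [mvneg_one, zero_oplus] at h
  rw [h, oplus_one]

theorem oplus_mvneg_self (a : M) : A.oplus a (A.mvneg a) = A.one := by
  rw [A.oplus_comm, mvneg_oplus_self]

theorem mvneg_otimes (a b : M) :
    A.mvneg (A.otimes a b) = A.oplus (A.mvneg a) (A.mvneg b) :=
  A.mvneg_mvneg _

theorem le_oplus_right (a b : M) : A.le a (A.oplus a b) := by
  rw [le, ← A.oplus_assoc, mvneg_oplus_self, one_oplus]

theorem otimes_le_left (a b : M) : A.le (A.otimes a b) a := by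
  rw [le, mvneg_otimes, A.oplus_comm, ← A.oplus_assoc, oplus_mvneg_self, one_oplus]

theorem inf_le_left (a b : M) : A.le (A.inf a b) a := A.otimes_le_left _ _

theorem mvneg_le_mvneg {a b : M} (h : A.le a b) : A.le (A.mvneg b) (A.mvneg a) := by
  rwa [le, A.mvneg_mvneg, A.oplus_comm]

theorem eq_zero_of_le_zero {a : M} (h : A.le a A.zero) : a = A.zero := by
  rw [le, A.oplus_zero, one] at h
  rw [← A.mvneg_mvneg a, h, A.mvneg_mvneg]

/-- The Łukasiewicz axiom read as `b ∨ a = a ∨ b = b`. -/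
theorem oplus_ominus_of_le {a b : M} (h : A.le a b) : A.oplus a (A.ominus b a) = b := by
  have hsup := A.luk b a
  rw [h, mvneg_one, zero_oplus, A.oplus_comm] at hsup
  rwa [ominus, otimes, A.mvneg_mvneg]

theorem oplus_le_oplus_left (c : M) {a b : M} (h : A.le a b) :
    A.le (A.oplus c a) (A.oplus c b) := by
  rw [← A.oplus_ominus_of_le h, ← A.oplus_assoc]
  exact A.le_oplus_right _ _

end MVAlgebra

namespace IsProbabilityMap

variable {M N : Type*} {A : MVAlgebra M} {B : MVAlgebra N} {p : M → N}

theorem map_zero (hp : IsProbabilityMap A B p) : p A.zero = B.zero := by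
  rw [← A.mvneg_one, hp.p2, hp.p3, B.mvneg_one]

theorem monotone (hp : IsProbabilityMap A B p) {a b : M} (h : A.le a b) :
    B.le (p a) (p b) := by
  rw [← A.oplus_ominus_of_le h, hp.p1]
  exact B.le_oplus_right _ _

theorem map_oplus_le (hp : IsProbabilityMap A B p) (a b : M) :
    B.le (p (A.oplus a b)) (B.oplus (p a) (p b)) := by
  rw [hp.p1]
  exact B.oplus_le_oplus_left _ (hp.monotone (A.inf_le_left _ _))

theorem otimes_le_map_otimes (hp : IsProbabilityMap A B p) (a b : M) :
    B.le (B.otimes (p a) (p b)) (p (A.otimes a b)) := by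
  have h := B.mvneg_le_mvneg (hp.map_oplus_le (A.mvneg a) (A.mvneg b))
  rwa [hp.p2, hp.p2, ← B.mvneg_otimes, B.mvneg_mvneg, ← A.mvneg_otimes, hp.p2,
    B.mvneg_mvneg] at h

end IsProbabilityMap

/-- `p(a ⊙ b) ≥ p(a) ⊙ p(b)`, and if `a ⊙ b = 0` then `p(a) ⊙ p(b) = 0`. -/
theorem probabilityMap_otimes {M N : Type*} (A : MVAlgebra M) (B : MVAlgebra N)
    (p : M → N) (hp : IsProbabilityMap A B p) :
    ∀ a b : M, B.le (B.otimes (p a) (p b)) (p (A.otimes a b)) ∧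
      (A.otimes a b = A.zero → B.otimes (p a) (p b) = B.zero) := by
  intro a b
  refine ⟨hp.otimes_le_map_otimes a b, fun h => B.eq_zero_of_le_zero ?_⟩
  rw [← hp.map_zero, ← h]
  exact hp.otimes_le_map_otimes a b
end

section
/- Let (G,u) and (H,v) be unital lattice-ordered abelian groups and let p : [0,u] → [0,v] satisfy p(0) = 0, p(u) = v, and p(a ⊕ b) = p(a) + p(b) whenever a, b ∈ [0,u] with a + b ≤ u. Then p is additive in the strong sense: p((a + b) ∧ u) = p(a) + p(b) − p((a + b − u) ∨ 0) for all a, b ∈ [0,u]. -/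
/-!
Truncated addition in `[0,u]` splits `b` as `d + c` with `d = b ⊓ (u - a)` and
`c = (a + b - u) ⊔ 0`, where `a + d = (a + b) ⊓ u`. Both `a + d` and `d + c` stay below `u`,
so additivity of `p` on these two pairs gives `p (a ⊕ b) = p a + p d` and `p b = p d + p c`;
eliminating `p d` is the claim.
-/

section LatticeOrderedGroup

variable {G : Type*} [Lattice G] [AddCommGroup G] [AddLeftMono G]

theorem add_inf_sub_eq_add_inf (a b u : G) : a + b ⊓ (u - a) = (a + b) ⊓ u := by
  rw [add_inf, add_sub_cancel]

theorem inf_sub_add_sup_sub_eq (a b u : G) : b ⊓ (u - a) + (a + b - u) ⊔ 0 = b := by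
  have hsup : (a + b - u) ⊔ 0 = b ⊔ (u - a) - (u - a) := by
    rw [sup_sub, sub_self, sub_sub_eq_add_sub, add_comm b a]
  rw [hsup, ← add_sub_assoc, inf_add_sup, add_sub_cancel_right]

end LatticeOrderedGroup

theorem probabilityMap_strong_additivity_general {G H : Type*}
    [Lattice G] [AddCommGroup G] [CovariantClass G G (· + ·) (· ≤ ·)]
    [AddCommGroup H]
    (u : G) (p : G → H)
    (hadd : ∀ a b, 0 ≤ a → a ≤ u → 0 ≤ b → b ≤ u → a + b ≤ u →
      p (a + b) = p a + p b) :
    ∀ a b, 0 ≤ a → a ≤ u → 0 ≤ b → b ≤ u →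
      p ((a + b) ⊓ u) = p a + p b - p ((a + b - u) ⊔ 0) := by
  intro a b ha hau hb hbu
  set d := b ⊓ (u - a)
  set c := (a + b - u) ⊔ 0
  have hd0 : 0 ≤ d := le_inf hb (sub_nonneg.2 hau)
  have hdu : d ≤ u := inf_le_left.trans hbu
  have hc0 : 0 ≤ c := le_sup_right
  have hdc : d + c = b := inf_sub_add_sup_sub_eq a b u
  have hcu : c ≤ u := (hdc ▸ le_add_of_nonneg_left hd0).trans hbu
  have had : a + d = (a + b) ⊓ u := add_inf_sub_eq_add_inf a b u
  have hp_sum : p ((a + b) ⊓ u) = p a + p d :=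
    had ▸ hadd a d ha hau hd0 hdu (had ▸ inf_le_right)
  have hp_b : p b = p d + p c := hdc ▸ hadd d c hd0 hdu hc0 hcu (hdc ▸ hbu)
  rw [hp_sum, hp_b]
  abel

/-- Let `(G,u)` and `(H,v)` be unital lattice-ordered abelian groups and
`p : [0,u] → [0,v]` with `p 0 = 0`, `p u = v`, additive on pairs `a, b ∈ [0,u]`
with `a + b ≤ u`. Then `p((a+b) ⊓ u) = p a + p b - p((a+b-u) ⊔ 0)` for all
`a, b ∈ [0,u]`. -/
theorem probabilityMap_strong_additivity {G H : Type*}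
    [Lattice G] [AddCommGroup G] [CovariantClass G G (· + ·) (· ≤ ·)]
    [Lattice H] [AddCommGroup H] [CovariantClass H H (· + ·) (· ≤ ·)]
    (u : G) (hu : 0 ≤ u) (v : H) (hv : 0 ≤ v) (p : G → H)
    (hrange : ∀ a, 0 ≤ a → a ≤ u → 0 ≤ p a ∧ p a ≤ v)
    (h0 : p 0 = 0) (h1 : p u = v)
    (hadd : ∀ a b, 0 ≤ a → a ≤ u → 0 ≤ b → b ≤ u → a + b ≤ u →
      p (a + b) = p a + p b) :
    ∀ a b, 0 ≤ a → a ≤ u → 0 ≤ b → b ≤ u →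
      p ((a + b) ⊓ u) = p a + p b - p ((a + b - u) ⊔ 0) :=
  probabilityMap_strong_additivity_general u p hadd
end
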